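/- arXiv:1912.11663 — 8 statements merged into one kernel-verified Lean document; each statement's English description precedes it below -/
import Mathlib

section
/- For every real q > 1, the diameter of the metric space (ℤ, d_q) equals 1/(q(q−1)), and this diameter is realized by any two successive integers: d_q(k+1, k) = 1/(q(q−1)) for all k ∈ ℤ. -/
/-! Since `1` divides every integer, `qnorm q 1` dominates every `qnorm q n` term by term, and
it is the geometric tail `∑_{k ≥ 2} q⁻ᵏ = 1 / (q (q - 1))`. -/

/-- The q-norm of an integer n: sum of 1/q^k over positive integers k not dividing n. -/
noncomputable def qnorm (q : ℝ) (n : ℤ) : ℝ :=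
  ∑' k : ℕ, if 1 ≤ k ∧ ¬ ((k : ℤ) ∣ n) then 1 / q ^ k else 0

section qnorm

variable {q : ℝ}

lemma summable_qnorm (hq : 1 < q) (n : ℤ) :
    Summable (fun k : ℕ => if 1 ≤ k ∧ ¬ ((k : ℤ) ∣ n) then 1 / q ^ k else 0) := by
  have hq0 : 0 < q := zero_lt_one.trans hq
  refine (summable_geometric_of_lt_one (inv_nonneg.2 hq0.le) (inv_lt_one_of_one_lt₀ hq)).of_nonneg_of_le
    (fun k => by positivity) (fun k => ?_)
  split_ifs
  · rw [one_div, inv_pow]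
  · positivity

/-- Every `k` not dividing `n` does not divide `m` either, so each term for `n` is a term for `m`. -/
lemma qnorm_le_qnorm_of_dvd (hq : 1 < q) {m n : ℤ} (hmn : m ∣ n) : qnorm q n ≤ qnorm q m := by
  refine (summable_qnorm hq n).tsum_le_tsum (fun k => ?_) (summable_qnorm hq m)
  have hq0 : 0 < q := zero_lt_one.trans hq
  by_cases hk : 1 ≤ k ∧ ¬ ((k : ℤ) ∣ n)
  · rw [if_pos hk, if_pos ⟨hk.1, fun hkm => hk.2 (hkm.trans hmn)⟩]
  · rw [if_neg hk]
    positivity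

lemma qnorm_one (hq : 1 < q) : qnorm q 1 = 1 / (q * (q - 1)) := by
  have hq0 : 0 < q := zero_lt_one.trans hq
  have hshift : ∀ k : ℕ, (if 1 ≤ k + 2 ∧ ¬ (((k + 2 : ℕ) : ℤ) ∣ 1) then 1 / q ^ (k + 2) else 0)
      = q⁻¹ ^ 2 * q⁻¹ ^ k := by
    intro k
    rw [if_pos ⟨by omega, fun h => by have := Int.le_of_dvd one_pos h; omega⟩]
    rw [one_div, ← inv_pow, ← pow_add, add_comm]
  rw [qnorm, ← (summable_qnorm hq 1).sum_add_tsum_nat_add 2]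
  simp only [Finset.sum_range_succ, Finset.sum_range_zero, hshift]
  rw [tsum_mul_left, tsum_geometric_of_lt_one (inv_nonneg.2 hq0.le) (inv_lt_one_of_one_lt₀ hq)]
  have : q - 1 ≠ 0 := by linarith
  field_simp
  norm_num

end qnorm

theorem stmt_6 (q : ℝ) (hq : 1 < q) :
    IsGreatest {r : ℝ | ∃ m n : ℤ, r = qnorm q (m - n)} (1 / (q * (q - 1))) ∧
    (∀ k : ℤ, qnorm q ((k + 1) - k) = 1 / (q * (q - 1))) := by
  refine ⟨⟨⟨1, 0, by rw [sub_zero, qnorm_one hq]⟩, ?_⟩, fun k => by rw [add_sub_cancel_left, qnorm_one hq]⟩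
  rintro _ ⟨m, n, rfl⟩
  exact qnorm_one hq ▸ qnorm_le_qnorm_of_dvd hq (one_dvd (m - n))
end

section
/- For every real q > 1, every integer a and every natural number n ≥ 1: if ‖a‖_q < 1/q^n then n divides a. -/
lemma qnorm_summand_nonneg {q : ℝ} (hq : 0 < q) (a : ℤ) (k : ℕ) :
    0 ≤ (if 1 ≤ k ∧ ¬ ((k : ℤ) ∣ a) then 1 / q ^ k else 0) := by
  split_ifs <;> positivity

lemma summable_qnorm_summand {q : ℝ} (hq : 1 < q) (a : ℤ) :
    Summable fun k : ℕ => if 1 ≤ k ∧ ¬ ((k : ℤ) ∣ a) then 1 / q ^ k else 0 := by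
  have hq0 : 0 < q := one_pos.trans hq
  have geometric : Summable fun k : ℕ => (1 / q) ^ k :=
    summable_geometric_of_lt_one (by positivity) ((div_lt_one hq0).mpr hq)
  refine geometric.of_nonneg_of_le (qnorm_summand_nonneg hq0 a) fun k => ?_
  split_ifs
  · rw [div_pow, one_pow]
  · positivity

lemma one_div_pow_le_qnorm {q : ℝ} (hq : 1 < q) (a : ℤ) {k : ℕ} (hk : 1 ≤ k)
    (hka : ¬ (k : ℤ) ∣ a) : 1 / q ^ k ≤ qnorm q a := by
  have := (summable_qnorm_summand hq a).le_tsum k fun i _ =>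
    qnorm_summand_nonneg (one_pos.trans hq) a i
  simpa [qnorm, hk, hka] using this

theorem stmt_7 (q : ℝ) (hq : 1 < q) (a : ℤ) (n : ℕ) (hn : 1 ≤ n)
    (h : qnorm q a < 1 / q ^ n) : (n : ℤ) ∣ a := by
  by_contra hna
  exact (one_div_pow_le_qnorm hq a hn hna).not_gt h
end

section
/- For every real q > 1, the mean of the q-norms exists and equals lim_{N→∞} (1/N) ∑_{n=1}^N ‖n‖_q = 1/(q−1) + ln((q−1)/q). -/
/-!
Exchanging the two sums, `(1/N) ∑_{n ≤ N} ‖n‖_q = ∑_{k ≥ 1} (N - ⌊N/k⌋)/N · q^{-k}`. For each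
`k` the density `(N - ⌊N/k⌋)/N` of non-multiples of `k` tends to `1 - 1/k`, and it is bounded by
`1`, so by dominated convergence the mean is `∑_{k ≥ 1} (1 - 1/k) q^{-k}`, which the geometric
and logarithmic series evaluate to `1/(q-1) + log (1 - 1/q)`.
-/

open Filter Finset Topology

theorem qnorm_eq_tsum_succ (q : ℝ) (n : ℤ) :
    qnorm q n = ∑' k : ℕ, if ¬ ((k + 1 : ℕ) : ℤ) ∣ n then q⁻¹ ^ (k + 1) else 0 := by
  rw [qnorm, ← Nat.succ_injective.tsum_eq]
  · simp [Nat.succ_eq_add_one]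
  · rintro (_ | j) hk
    · simp at hk
    · exact ⟨j, rfl⟩

theorem card_filter_not_dvd_Icc (k N : ℕ) : #{n ∈ Icc 1 N | ¬ k ∣ n} = N - N / k := by
  have hdvd : #{n ∈ Icc 1 N | k ∣ n} = N / k := Nat.Ioc_filter_dvd_card_eq_div N k
  have hsplit := card_filter_add_card_filter_not (s := Icc 1 N) (k ∣ ·)
  simp only [Nat.card_Icc, add_tsub_cancel_right] at hsplit
  omega

theorem summable_inv_pow_succ {q : ℝ} (hq : 1 < q) : Summable fun k : ℕ => q⁻¹ ^ (k + 1) :=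
  (summable_nat_add_iff 1).mpr
    (summable_geometric_of_lt_one (by positivity) (inv_lt_one_of_one_lt₀ hq))

theorem sum_Icc_qnorm {q : ℝ} (hq : 1 < q) (N : ℕ) :
    ∑ n ∈ Icc 1 N, qnorm q n = ∑' k : ℕ, ((N : ℝ) - (N / (k + 1) : ℕ)) * q⁻¹ ^ (k + 1) := by
  simp_rw [qnorm_eq_tsum_succ]
  rw [← Summable.tsum_finsetSum]
  · refine tsum_congr fun k => ?_
    simp_rw [Int.natCast_dvd_natCast]
    rw [← sum_filter, sum_const, nsmul_eq_mul, card_filter_not_dvd_Icc,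
      Nat.cast_sub (Nat.div_le_self _ _)]
  · intro n _
    refine (summable_inv_pow_succ hq).of_nonneg_of_le (fun k => by positivity) fun k => ?_
    split_ifs <;> first | exact le_rfl | positivity

theorem tendsto_natDiv_div_atTop {k : ℕ} (hk : 0 < k) :
    Tendsto (fun N : ℕ => ((N / k : ℕ) : ℝ) / N) atTop (𝓝 (1 / k)) := by
  have hk' : (0 : ℝ) < k := by exact_mod_cast hk
  have hfloor := (tendsto_nat_floor_div_atTop (R := ℝ)).comp
    ((tendsto_natCast_atTop_atTop (R := ℝ)).atTop_div_const hk')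
  convert hfloor.div_const (k : ℝ) using 2 with N
  · simp only [Function.comp_apply, Nat.floor_div_eq_div]
    field_simp

theorem tendsto_one_sub_natDiv_div_atTop {k : ℕ} (hk : 0 < k) :
    Tendsto (fun N : ℕ => ((N : ℝ) - (N / k : ℕ)) / N) atTop (𝓝 (1 - 1 / k)) := by
  refine (tendsto_const_nhds.sub (tendsto_natDiv_div_atTop hk)).congr' ?_
  filter_upwards [eventually_ne_atTop 0] with N hN
  rw [sub_div, div_self (Nat.cast_ne_zero.mpr hN)]

theorem hasSum_one_sub_inv_mul_pow_succ {x : ℝ} (hx : |x| < 1) :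
    HasSum (fun k : ℕ => (1 - 1 / (k + 1)) * x ^ (k + 1)) (x / (1 - x) + Real.log (1 - x)) := by
  have hgeom : HasSum (fun k : ℕ => x ^ (k + 1)) (x / (1 - x)) := by
    simpa [pow_succ', div_eq_mul_inv] using (hasSum_geometric_of_abs_lt_one hx).mul_left x
  rw [← sub_neg_eq_add]
  exact (hgeom.sub (Real.hasSum_pow_div_log_of_abs_lt_one hx)).congr_fun fun k => by ring

theorem norm_sub_natDiv_div_le_one (N k : ℕ) : ‖((N : ℝ) - (N / k : ℕ)) / N‖ ≤ 1 := by
  have hdiv : ((N / k : ℕ) : ℝ) ≤ N := by exact_mod_cast Nat.div_le_self N k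
  rw [Real.norm_of_nonneg (div_nonneg (sub_nonneg.mpr hdiv) N.cast_nonneg)]
  refine div_le_one_of_le₀ ?_ N.cast_nonneg
  linarith [(N / k).cast_nonneg (α := ℝ)]

theorem stmt_9 (q : ℝ) (hq : 1 < q) :
    Filter.Tendsto
      (fun N : ℕ => (∑ n ∈ Finset.Icc 1 N, qnorm q (n : ℤ)) / (N : ℝ))
      Filter.atTop (nhds (1 / (q - 1) + Real.log ((q - 1) / q))) := by
  have hq₀ : q ≠ 0 := by positivity
  have hq₁ : q - 1 ≠ 0 := sub_ne_zero.mpr hq.ne'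
  have hx : |q⁻¹| < 1 := by rw [abs_of_pos (by positivity)]; exact inv_lt_one_of_one_lt₀ hq
  have hlim : 1 / (q - 1) + Real.log ((q - 1) / q)
      = ∑' k : ℕ, (1 - 1 / ((k : ℝ) + 1)) * q⁻¹ ^ (k + 1) := by
    rw [(hasSum_one_sub_inv_mul_pow_succ hx).tsum_eq]
    congr 1
    · field_simp
    · congr 1; field_simp
  simp_rw [sum_Icc_qnorm hq, ← tsum_div_const, mul_div_right_comm, hlim]
  refine tendsto_tsum_of_dominated_convergence (summable_inv_pow_succ hq)
    (fun k => by exact_mod_cast (tendsto_one_sub_natDiv_div_atTop k.succ_pos).mul_const _)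
    (.of_forall fun N k => ?_)
  rw [norm_mul, norm_pow, norm_inv, Real.norm_of_nonneg (by linarith : 0 ≤ q)]
  exact mul_le_of_le_one_left (by positivity) (norm_sub_natDiv_div_le_one N (k + 1))
end

section
/- For every real q > 1 and every natural number n > 1: if n is odd then ‖n‖_q > 1/(q²−1), and if n is even then ‖n‖_q ≤ 1/(q²(q−1)). Moreover, 1/(q²(q−1)) < 1/(q²−1) holds if and only if q > (1+√5)/2. -/
/-!
Both bounds compare the series defining `‖n‖_q` termwise with a geometric series. If `n` is odd,
no even `k` divides `n`, so `‖n‖_q` dominates `∑_{k ≥ 1} q^{-2k} = 1/(q² - 1)`, strictly because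
the odd index `k = |n| + 2` does not divide `n` either. If `n` is even, `1` and `2` divide `n`, so
`‖n‖_q ≤ ∑_{k ≥ 3} q^{-k} = 1/(q²(q - 1))`. Comparing the two bounds reduces to `q + 1 < q²`,
i.e. to `q` exceeding the golden ratio.
-/

open Real

section GeometricSeries

variable {q : ℝ}

theorem summable_ite_one_div_pow (hq : 1 < q) (p : ℕ → Prop) [DecidablePred p] :
    Summable fun k : ℕ => if p k then 1 / q ^ k else 0 := by
  have hr : 1 / q < 1 := (div_lt_one (by positivity)).2 hq
  refine (summable_geometric_of_lt_one (by positivity) hr).of_nonneg_of_le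
    (fun k => by split_ifs <;> positivity) fun k => ?_
  split_ifs
  · rw [one_div_pow]
  · positivity

theorem tsum_ite_lt_one_div_pow (hq : 1 < q) (m : ℕ) :
    (∑' k : ℕ, if m < k then 1 / q ^ k else 0) = 1 / (q ^ m * (q - 1)) := by
  have hq0 : 0 < q := one_pos.trans hq
  have hr : 1 / q < 1 := (div_lt_one hq0).2 hq
  have hsupp : (Function.support fun k : ℕ => if m < k then 1 / q ^ k else 0) ⊆
      Set.range fun j => j + (m + 1) := by
    intro k hk
    have hmk : m < k := by by_contra h; simp [h] at hk
    exact ⟨k - (m + 1), by simp only; omega⟩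
  have hterm (j : ℕ) : (if m < j + (m + 1) then 1 / q ^ (j + (m + 1)) else 0) =
      (1 / q) ^ j * (1 / q ^ (m + 1)) := by
    rw [if_pos (by omega), pow_add, one_div_pow, one_div_mul_one_div]
  rw [← (add_left_injective (m + 1)).tsum_eq hsupp]
  simp only [hterm, tsum_mul_right, tsum_geometric_of_lt_one (by positivity) hr]
  have : q - 1 ≠ 0 := sub_ne_zero.2 hq.ne'
  field_simp
  ring

theorem tsum_ite_even_pos_one_div_pow (hq : 1 < q) :
    (∑' k : ℕ, if Even k ∧ 1 ≤ k then 1 / q ^ k else 0) = 1 / (q ^ 2 - 1) := by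
  have hr : 1 / q ^ 2 < 1 := (div_lt_one (by positivity)).2 (one_lt_pow₀ hq two_ne_zero)
  have hsupp : (Function.support fun k : ℕ => if Even k ∧ 1 ≤ k then 1 / q ^ k else 0) ⊆
      Set.range fun j => 2 * j + 2 := by
    intro k hk
    obtain ⟨⟨i, rfl⟩, hi⟩ : Even k ∧ 1 ≤ k := by by_contra h; simp [h] at hk
    exact ⟨i - 1, by simp only; omega⟩
  have hinj : Function.Injective fun j : ℕ => 2 * j + 2 := fun a b h => by simp at h; omega
  have hterm (j : ℕ) :
      (if Even (2 * j + 2) ∧ 1 ≤ 2 * j + 2 then 1 / q ^ (2 * j + 2) else 0) =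
        (1 / q ^ 2) ^ j * (1 / q ^ 2) := by
    rw [if_pos ⟨⟨j + 1, by ring⟩, by omega⟩, ← pow_succ, one_div_pow, ← pow_mul]
    ring_nf
  rw [← hinj.tsum_eq hsupp]
  simp only [hterm, tsum_mul_right, tsum_geometric_of_lt_one (by positivity) hr]
  have : q ^ 2 - 1 ≠ 0 := by nlinarith
  field_simp

end GeometricSeries

theorem one_div_sq_sub_one_lt_qnorm_of_odd {q : ℝ} (hq : 1 < q) {n : ℤ} (hn : Odd n) :
    1 / (q ^ 2 - 1) < qnorm q n := by
  have hle (k : ℕ) : (if Even k ∧ 1 ≤ k then 1 / q ^ k else 0) ≤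
      if 1 ≤ k ∧ ¬ ((k : ℤ) ∣ n) then 1 / q ^ k else 0 := by
    by_cases hk : Even k ∧ 1 ≤ k
    · have hndvd : ¬ ((k : ℤ) ∣ n) := fun hd =>
        Int.not_even_iff_odd.2 hn <|
          even_iff_two_dvd.2 (((Int.even_coe_nat k).2 hk.1).two_dvd.trans hd)
      simp [hk, hndvd]
    · rw [if_neg hk]
      split_ifs <;> positivity
  have hlt : (if Even (n.natAbs + 2) ∧ 1 ≤ n.natAbs + 2 then 1 / q ^ (n.natAbs + 2) else 0) <
      if 1 ≤ n.natAbs + 2 ∧ ¬ (((n.natAbs + 2 : ℕ) : ℤ) ∣ n) then 1 / q ^ (n.natAbs + 2)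
      else 0 := by
    have hodd : ¬ Even (n.natAbs + 2) := by
      rw [Nat.even_add, Int.natAbs_even]; simp [Int.not_even_iff_odd.2 hn]
    have hndvd : ¬ (((n.natAbs + 2 : ℕ) : ℤ) ∣ n) := by
      rw [Int.natCast_dvd]
      exact Nat.not_dvd_of_pos_of_lt (Int.natAbs_pos.2 fun h => by simp [h] at hn) (by omega)
    rw [if_neg (by tauto), if_pos ⟨by omega, hndvd⟩]
    positivity
  rw [← tsum_ite_even_pos_one_div_pow hq]
  exact (summable_ite_one_div_pow hq _).tsum_lt_tsum hle hlt (summable_ite_one_div_pow hq _)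

theorem qnorm_le_of_even {q : ℝ} (hq : 1 < q) {n : ℤ} (hn : Even n) :
    qnorm q n ≤ 1 / (q ^ 2 * (q - 1)) := by
  have hle (k : ℕ) : (if 1 ≤ k ∧ ¬ ((k : ℤ) ∣ n) then 1 / q ^ k else 0) ≤
      if 2 < k then 1 / q ^ k else 0 := by
    by_cases hk : 2 < k
    · rw [if_pos hk]
      split_ifs
      exacts [le_rfl, by positivity]
    · rw [if_neg hk, if_neg]
      rintro ⟨hk1, hndvd⟩
      obtain rfl | rfl : k = 1 ∨ k = 2 := by omega
      exacts [hndvd (one_dvd n), hndvd hn.two_dvd]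
  rw [← tsum_ite_lt_one_div_pow hq 2]
  exact (summable_ite_one_div_pow hq _).tsum_le_tsum hle (summable_ite_one_div_pow hq _)

theorem goldenRatio_lt_iff_add_one_lt_sq {q : ℝ} (hq : 0 < q) :
    goldenRatio < q ↔ q + 1 < q ^ 2 := by
  have hfactor : q ^ 2 - (q + 1) = (q - goldenRatio) * (q - goldenConj) := by
    linear_combination q * goldenRatio_add_goldenConj - goldenRatio_mul_goldenConj
  have hconj : 0 < q - goldenConj := by linarith [goldenConj_neg]
  rw [← sub_pos, ← sub_pos (a := q ^ 2), hfactor, mul_pos_iff_of_pos_right hconj]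

theorem one_div_sq_mul_sub_one_lt_one_div_sq_sub_one_iff {q : ℝ} (hq : 1 < q) :
    1 / (q ^ 2 * (q - 1)) < 1 / (q ^ 2 - 1) ↔ goldenRatio < q := by
  have hq1 : 0 < q - 1 := sub_pos.2 hq
  rw [one_div_lt_one_div (by positivity) (by nlinarith),
    goldenRatio_lt_iff_add_one_lt_sq (by linarith), show q ^ 2 - 1 = (q + 1) * (q - 1) by ring,
    mul_lt_mul_iff_left₀ hq1]

theorem stmt_10 (q : ℝ) (hq : 1 < q) :
    (∀ n : ℕ, 1 < n → Odd n → 1 / (q ^ 2 - 1) < qnorm q (n : ℤ)) ∧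
    (∀ n : ℕ, 1 < n → Even n → qnorm q (n : ℤ) ≤ 1 / (q ^ 2 * (q - 1))) ∧
    (1 / (q ^ 2 * (q - 1)) < 1 / (q ^ 2 - 1) ↔ (1 + Real.sqrt 5) / 2 < q) :=
  ⟨fun _ _ hn => one_div_sq_sub_one_lt_qnorm_of_odd hq (Int.odd_coe_nat _ |>.2 hn),
    fun _ _ hn => qnorm_le_of_even hq (Int.even_coe_nat _ |>.2 hn),
    one_div_sq_mul_sub_one_lt_one_div_sq_sub_one_iff hq⟩
end

section
/- Let (a_n) be a sequence of positive integers and q > 1. Then ‖a_n‖_q → 1/(q(q−1)) as n → ∞ if and only if (a_n) is prime factor increasing, i.e., for every prime p there is N(p) such that p ∤ a_n for all n ≥ N(p). -/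
noncomputable def Sdiv (q : ℝ) (n : ℤ) : ℝ :=
  ∑' k : ℕ, if 2 ≤ k ∧ ((k : ℤ) ∣ n) then 1 / q ^ k else 0

section aux
variable {q : ℝ} (hq : 1 < q)

include hq

lemma hr0 : (0:ℝ) < 1/q := by positivity

lemma hr1 : 1/q < 1 := by
  rw [div_lt_one (by linarith)]; linarith

lemma summable_ite (P : ℕ → Prop) [DecidablePred P] :
    Summable (fun k : ℕ => if P k then 1 / q ^ k else 0) := by
  refine Summable.of_nonneg_of_le (fun k => ?_) (fun k => ?_)
    (summable_geometric_of_lt_one (hr0 hq).le (hr1 hq))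
  · split <;> positivity
  · split
    · rw [one_div_pow]
    · positivity

lemma qnorm_eq (m : ℤ) : qnorm q m = 1 / (q * (q - 1)) - Sdiv q m := by
  classical
  have hq0 : (0:ℝ) < q := by linarith
  have hsumA := summable_ite hq (fun k : ℕ => 1 ≤ k ∧ ¬ ((k : ℤ) ∣ m))
  have hsumB := summable_ite hq (fun k : ℕ => 2 ≤ k ∧ ((k : ℤ) ∣ m))
  have hsumC := summable_ite hq (fun k : ℕ => k = 1)
  have hpt : ∀ k : ℕ,
      (if 1 ≤ k then 1 / q ^ k else 0)
        = (if 1 ≤ k ∧ ¬ ((k : ℤ) ∣ m) then 1 / q ^ k else 0)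
          + ((if 2 ≤ k ∧ ((k : ℤ) ∣ m) then 1 / q ^ k else 0)
            + (if k = 1 then 1 / q ^ k else 0)) := by
    intro k
    rcases k with _ | _ | k
    · norm_num
    · norm_num
    · have hk1 : ¬ (k + 1 + 1 = 1) := by omega
      rw [if_neg hk1, add_zero, if_pos (by omega : 1 ≤ k + 1 + 1)]
      by_cases hd : (((k + 1 + 1 : ℕ)) : ℤ) ∣ m
      · rw [if_neg (by tauto), if_pos ⟨by omega, hd⟩, zero_add]
      · rw [if_pos ⟨by omega, hd⟩, if_neg (by tauto), add_zero]
  have hC : (∑' k : ℕ, if k = 1 then 1 / q ^ k else 0) = 1 / q := by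
    have : (fun k : ℕ => if k = 1 then 1 / q ^ k else 0)
        = fun k : ℕ => if k = 1 then 1 / q else 0 := by
      funext k; split_ifs with h
      · subst h; norm_num
      · rfl
    rw [this, tsum_ite_eq]
  have hD : (∑' k : ℕ, if 1 ≤ k then 1 / q ^ k else 0) = qnorm q m + (Sdiv q m + 1 / q) := by
    rw [qnorm, Sdiv, ← hC, ← Summable.tsum_add hsumB hsumC, ← Summable.tsum_add hsumA (hsumB.add hsumC)]
    exact tsum_congr hpt
  have hgeo : (∑' k : ℕ, (1/q) ^ k) = (1 - 1/q)⁻¹ :=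
    tsum_geometric_of_lt_one (hr0 hq).le (hr1 hq)
  have hD2 : (∑' k : ℕ, if 1 ≤ k then 1 / q ^ k else 0) = (1 - 1/q)⁻¹ - 1 := by
    rw [← hgeo]
    have hpt2 : ∀ k : ℕ, (if 1 ≤ k then 1 / q ^ k else 0) = (1/q)^k - (if k = 0 then 1 else 0) := by
      intro k
      rcases k with _ | k
      · norm_num
      · have : 1 ≤ k + 1 := by omega
        simp [this, one_div_pow]
    have hone : (∑' k : ℕ, if k = (0:ℕ) then (1:ℝ) else 0) = 1 := tsum_ite_eq 0 1
    calc (∑' k : ℕ, if 1 ≤ k then 1 / q ^ k else 0)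
        = ∑' k : ℕ, ((1/q)^k - (if k = 0 then 1 else 0)) := tsum_congr hpt2
      _ = (∑' k : ℕ, (1/q)^k) - (∑' k : ℕ, if k = (0:ℕ) then (1:ℝ) else 0) :=
          Summable.tsum_sub (summable_geometric_of_lt_one (hr0 hq).le (hr1 hq))
            (summable_ite hq (fun k : ℕ => k = 0) |>.congr (by
              intro k; split_ifs with h
              · subst h; norm_num
              · rfl))
      _ = (∑' k : ℕ, (1/q)^k) - 1 := by rw [hone]
  have hq1 : q - 1 ≠ 0 := by intro h; nlinarith [hq]
  have hqne : q ≠ 0 := by positivity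
  have hcomb : (1 - 1/q)⁻¹ - 1 = qnorm q m + (Sdiv q m + 1 / q) := by rw [← hD2, hD]
  have hval : (1 - 1/q)⁻¹ = q / (q - 1) := by
    rw [one_sub_div hqne, inv_div]
  rw [hval] at hcomb
  have : qnorm q m = q / (q-1) - 1 - 1/q - Sdiv q m := by linarith
  rw [this]
  field_simp
  ring

lemma Sdiv_nonneg (m : ℤ) : 0 ≤ Sdiv q m := by
  have := hq
  apply tsum_nonneg
  intro k; split <;> positivity

lemma le_Sdiv (m : ℤ) (p : ℕ) (hp2 : 2 ≤ p) (hd : (p : ℤ) ∣ m) : (1/q)^p ≤ Sdiv q m := by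
  classical
  have h := Summable.le_tsum (summable_ite hq (fun k : ℕ => 2 ≤ k ∧ ((k : ℤ) ∣ m))) p
    (fun b _ => by split <;> positivity)
  rw [if_pos ⟨hp2, hd⟩] at h
  rw [one_div_pow]
  exact h

lemma Sdiv_le (m : ℤ) (B : ℕ) (h : ∀ k : ℕ, 2 ≤ k → (k : ℤ) ∣ m → B < k) :
    Sdiv q m ≤ (1/q)^(B+1) * (1 - 1/q)⁻¹ := by
  classical
  set f : ℕ → ℝ := fun k => if B < k then 1 / q ^ k else 0 with hf
  have hsumf : Summable f := summable_ite hq (fun k : ℕ => B < k)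
  have h1 : Sdiv q m ≤ ∑' k : ℕ, f k := by
    refine Summable.tsum_le_tsum (fun k => ?_) (summable_ite hq _) hsumf
    by_cases hk : 2 ≤ k ∧ ((k : ℤ) ∣ m)
    · rw [if_pos hk, hf]
      dsimp only
      rw [if_pos (h k hk.1 hk.2)]
    · rw [if_neg hk, hf]
      dsimp only
      split <;> positivity
  have hinj : Function.Injective (fun j : ℕ => j + (B + 1)) :=
    fun a b hab => by simpa using hab
  have h2 : (∑' j : ℕ, f (j + (B+1))) = ∑' k : ℕ, f k := by
    apply hinj.tsum_eq
    intro x hx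
    simp only [Function.mem_support, Ne] at hx
    rcases lt_or_ge B x with hBx | hBx
    · exact ⟨x - (B+1), by simp; omega⟩
    · exact absurd (if_neg (not_lt.mpr hBx)) hx
  have h3 : (∑' j : ℕ, f (j + (B+1))) = (1/q)^(B+1) * (1 - 1/q)⁻¹ := by
    have hpt : ∀ j : ℕ, f (j + (B+1)) = (1/q)^j * (1/q)^(B+1) := by
      intro j
      rw [hf]
      dsimp only
      rw [if_pos (by omega), ← pow_add, one_div_pow]
    rw [tsum_congr hpt, tsum_mul_right,
      tsum_geometric_of_lt_one (hr0 hq).le (hr1 hq)]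
    ring
  calc Sdiv q m ≤ ∑' k : ℕ, f k := h1
    _ = (1/q)^(B+1) * (1 - 1/q)⁻¹ := by rw [← h2, h3]

end aux

theorem stmt_13 (q : ℝ) (hq : 1 < q) (a : ℕ → ℕ) (ha : ∀ n, 0 < a n) :
    Filter.Tendsto (fun n => qnorm q ((a n : ℤ))) Filter.atTop (nhds (1 / (q * (q - 1))))
      ↔ (∀ p : ℕ, p.Prime → ∃ N, ∀ n ≥ N, ¬ p ∣ a n) := by
  classical
  set C := 1 / (q * (q - 1)) with hC
  have hqn : ∀ n, qnorm q ((a n : ℤ)) = C - Sdiv q ((a n : ℤ)) := fun n => qnorm_eq hq _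
  have hiff : Filter.Tendsto (fun n => qnorm q ((a n : ℤ))) Filter.atTop (nhds C)
      ↔ Filter.Tendsto (fun n => Sdiv q ((a n : ℤ))) Filter.atTop (nhds 0) := by
    constructor
    · intro h
      have := (tendsto_const_nhds (x := C) (f := Filter.atTop (α := ℕ))).sub h
      simp only [hqn, sub_sub_cancel, sub_self] at this
      exact this
    · intro h
      have := (tendsto_const_nhds (x := C) (f := Filter.atTop (α := ℕ))).sub h
      simp only [sub_zero] at this
      simpa only [← hqn] using this
  rw [hiff]
  constructor
  · intro h p hp
    have hε : (0:ℝ) < (1/q)^p := by positivity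
    have hev : ∀ᶠ n in Filter.atTop, Sdiv q ((a n : ℤ)) < (1/q)^p :=
      h.eventually (gt_mem_nhds hε)
    obtain ⟨N, hN⟩ := Filter.eventually_atTop.mp hev
    refine ⟨N, fun n hn hd => ?_⟩
    have : (1/q)^p ≤ Sdiv q ((a n : ℤ)) :=
      le_Sdiv hq _ p hp.two_le (Int.natCast_dvd_natCast.mpr hd)
    exact absurd (hN n hn) (not_lt.mpr this)
  · intro h
    rw [Metric.tendsto_nhds]
    intro ε hε
    have htail : Filter.Tendsto (fun B : ℕ => (1/q)^(B+1) * (1 - 1/q)⁻¹)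
        Filter.atTop (nhds 0) := by
      have h1 : Filter.Tendsto (fun B : ℕ => (1/q)^(B+1)) Filter.atTop (nhds 0) :=
        (tendsto_pow_atTop_nhds_zero_of_lt_one (hr0 hq).le (hr1 hq)).comp
          (Filter.tendsto_add_atTop_nat 1)
      simpa using h1.mul_const _
    obtain ⟨B, hB⟩ := (htail.eventually (gt_mem_nhds hε)).exists
    have key : ∀ᶠ n in Filter.atTop,
        ∀ p ∈ Finset.filter Nat.Prime (Finset.range (B+1)), ¬ p ∣ a n := by
      rw [Filter.eventually_all_finset]
      intro p hp
      obtain ⟨N, hN⟩ := h p (Finset.mem_filter.mp hp).2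
      exact Filter.eventually_atTop.mpr ⟨N, hN⟩
    refine key.mono fun n hn => ?_
    have hSle : Sdiv q ((a n : ℤ)) ≤ (1/q)^(B+1) * (1 - 1/q)⁻¹ := by
      apply Sdiv_le hq
      intro k hk2 hkd
      by_contra hBk
      push_neg at hBk
      have hkdvd : k ∣ a n := Int.natCast_dvd_natCast.mp hkd
      have hkp : (Nat.minFac k).Prime := Nat.minFac_prime (by omega)
      have hple : Nat.minFac k ≤ B := le_trans (Nat.minFac_le (by omega)) hBk
      exact hn (Nat.minFac k)
        (Finset.mem_filter.mpr ⟨Finset.mem_range.mpr (by omega), hkp⟩)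
        ((Nat.minFac_dvd k).trans hkdvd)
    have hdist : dist (Sdiv q ((a n : ℤ))) 0 = Sdiv q ((a n : ℤ)) := by
      rw [Real.dist_eq, sub_zero, abs_of_nonneg (Sdiv_nonneg hq _)]
    rw [hdist]
    exact lt_of_le_of_lt hSle hB
end

section
/- If (a_n) is a sequence of positive integers with ‖a_n‖_q → 0, then ‖a_n + 1‖_q → 1/(q(q−1)) as n → ∞, for every q > 1. -/
open Filter

lemma qaux_summable {q : ℝ} (hq : 1 < q) (P : ℕ → Prop) [DecidablePred P] :
    Summable (fun k : ℕ => if P k then 1 / q ^ k else 0) := by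
  have h0 : (0:ℝ) < q := one_pos.trans hq
  have hgeo : Summable (fun k : ℕ => (1/q)^k) :=
    summable_geometric_of_lt_one (by positivity) (by rw [div_lt_one h0]; exact hq)
  refine hgeo.of_nonneg_of_le (fun k => ?_) (fun k => ?_)
  · split_ifs
    · positivity
    · exact le_rfl
  · rw [one_div_pow]
    split_ifs
    · exact le_rfl
    · positivity

lemma qnorm_ge {q : ℝ} (hq : 1 < q) (m : ℤ) (k : ℕ) (hk : 1 ≤ k) (hd : ¬ (k:ℤ) ∣ m) :
    1 / q ^ k ≤ qnorm q m := by
  classical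
  have hs := qaux_summable hq (fun k => 1 ≤ k ∧ ¬ ((k:ℤ) ∣ m))
  have h := Summable.le_tsum hs k (fun j _ => by
    split_ifs
    · positivity
    · exact le_rfl)
  simpa [qnorm, hk, hd] using h

lemma qdvd_eventually {q : ℝ} (hq : 1 < q) (a : ℕ → ℕ)
    (h : Tendsto (fun n => qnorm q ((a n : ℤ))) atTop (nhds 0)) (k : ℕ) (hk : 1 ≤ k) :
    ∀ᶠ n in atTop, (k:ℤ) ∣ (a n : ℤ) := by
  have h0 : (0:ℝ) < q := one_pos.trans hq
  have hpos : (0:ℝ) < 1 / q ^ k := by positivity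
  filter_upwards [h.eventually_lt_const hpos] with n hn
  by_contra hd
  exact absurd (qnorm_ge hq _ k hk hd) (not_le.mpr hn)

lemma qtsum_two {q : ℝ} (hq : 1 < q) :
    ∑' k : ℕ, (if 2 ≤ k then 1 / q ^ k else 0) = 1 / (q * (q - 1)) := by
  have h0 : (0:ℝ) < q := one_pos.trans hq
  have hne : q ≠ 0 := ne_of_gt h0
  have hlt : 1/q < 1 := by rw [div_lt_one h0]; exact hq
  have hc0 : (0:ℝ) ≤ 1/q := by positivity
  have hgeo : Summable (fun k : ℕ => (1/q)^k) := summable_geometric_of_lt_one hc0 hlt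
  have key : ∀ k : ℕ, (if 2 ≤ k then 1 / q ^ k else 0)
      = (1/q)^k - (if k = 0 then 1 else if k = 1 then 1/q else 0) := by
    intro k
    match k with
    | 0 => norm_num
    | 1 => norm_num
    | (n+2) =>
      have h2 : 2 ≤ n + 2 := by omega
      simp [h2, one_div_pow]
  have hr : Summable (fun k : ℕ => if k = 0 then (1:ℝ) else if k = 1 then 1/q else 0) := by
    apply summable_of_ne_finset_zero (s := ({0, 1} : Finset ℕ))
    intro k hk
    simp only [Finset.mem_insert, Finset.mem_singleton, not_or] at hk
    simp [hk.1, hk.2]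
  have hrv : ∑' k : ℕ, (if k = 0 then (1:ℝ) else if k = 1 then 1/q else 0) = 1 + 1/q := by
    rw [tsum_eq_sum (s := ({0, 1} : Finset ℕ)) (by
      intro k hk
      simp only [Finset.mem_insert, Finset.mem_singleton, not_or] at hk
      simp [hk.1, hk.2])]
    norm_num
  rw [tsum_congr key, Summable.tsum_sub hgeo hr, hrv, tsum_geometric_of_lt_one hc0 hlt]
  have h1 : q - 1 ≠ 0 := by intro hc; nlinarith
  have h2 : 1 - 1/q ≠ 0 := by
    intro hc
    apply h1
    field_simp at hc
    linarith
  field_simp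
  ring

lemma qtail_le {q : ℝ} (hq : 1 < q) (N : ℕ) (P : ℕ → Prop) [DecidablePred P]
    (hP : ∀ k ≤ N, ¬ P k) :
    ∑' k : ℕ, (if P k then 1 / q ^ k else 0) ≤ (1/q)^(N+1) * (1 - 1/q)⁻¹ := by
  have h0 : (0:ℝ) < q := one_pos.trans hq
  have hlt : 1/q < 1 := by rw [div_lt_one h0]; exact hq
  have hc0 : (0:ℝ) ≤ 1/q := by positivity
  have hb : Summable (fun k : ℕ => if N + 1 ≤ k then 1 / q ^ k else 0) :=
    qaux_summable hq (fun k => N + 1 ≤ k)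
  have hle : ∑' k : ℕ, (if P k then 1 / q ^ k else 0)
      ≤ ∑' k : ℕ, (if N + 1 ≤ k then 1 / q ^ k else 0) := by
    apply Summable.tsum_le_tsum _ (qaux_summable hq P) hb
    intro k
    by_cases hk : P k
    · have hNk : N + 1 ≤ k := by
        by_contra hkN
        exact hP k (by omega) hk
      simp [hk, hNk]
    · simp only [hk, if_false]
      split_ifs
      · positivity
      · exact le_rfl
  have heq : ∑' k : ℕ, (if N + 1 ≤ k then 1 / q ^ k else 0) = (1/q)^(N+1) * (1 - 1/q)⁻¹ := by
    have hinj : Function.Injective (fun k : ℕ => k + (N+1)) := fun a b hab => by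
      simpa using hab
    have hzero : (Function.support fun k : ℕ => if N + 1 ≤ k then 1 / q ^ k else 0)
        ⊆ Set.range (fun k : ℕ => k + (N+1)) := by
      intro x hx
      by_cases hxN : N + 1 ≤ x
      · exact ⟨x - (N+1), by simp; omega⟩
      · exact absurd (if_neg hxN) hx
    have ht := Function.Injective.tsum_eq
      (f := fun k : ℕ => if N + 1 ≤ k then 1 / q ^ k else 0) hinj hzero
    rw [← ht]
    have hcong : ∀ k : ℕ, (if N + 1 ≤ k + (N+1) then 1 / q ^ (k + (N+1)) else 0)
        = (1/q)^(N+1) * (1/q)^k := by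
      intro k
      rw [if_pos (by omega), ← pow_add, one_div_pow, add_comm]
    rw [tsum_congr hcong, tsum_mul_left, tsum_geometric_of_lt_one hc0 hlt]
  exact hle.trans_eq heq

theorem stmt_15 (q : ℝ) (hq : 1 < q) (a : ℕ → ℕ) (ha : ∀ n, 0 < a n)
    (h : Filter.Tendsto (fun n => qnorm q ((a n : ℤ))) Filter.atTop (nhds 0)) :
    Filter.Tendsto (fun n => qnorm q ((a n : ℤ) + 1)) Filter.atTop
      (nhds (1 / (q * (q - 1)))) := by
  classical
  have h0 : (0:ℝ) < q := one_pos.trans hq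
  have hlt : 1/q < 1 := by rw [div_lt_one h0]; exact hq
  have hc0 : (0:ℝ) ≤ 1/q := by positivity
  rw [Metric.tendsto_nhds]
  intro ε hε
  have htt : Tendsto (fun N : ℕ => (1/q)^(N+1) * (1 - 1/q)⁻¹) atTop (nhds 0) := by
    have hp := (tendsto_pow_atTop_nhds_zero_of_lt_one hc0 hlt).comp
      (tendsto_add_atTop_nat 1)
    simpa using hp.mul_const (1 - 1/q)⁻¹
  obtain ⟨N, hN⟩ := (htt.eventually_lt_const hε).exists
  have hdvd : ∀ᶠ n in atTop, ∀ k ∈ Finset.Icc 1 N, (k:ℤ) ∣ (a n : ℤ) := by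
    rw [eventually_all_finset]
    intro k hk
    exact qdvd_eventually hq a h k (Finset.mem_Icc.mp hk).1
  filter_upwards [hdvd] with n hn
  set m : ℤ := (a n : ℤ) + 1 with hm
  have hsplit : ∀ k : ℕ, (if 2 ≤ k then 1 / q ^ k else 0)
      = (if 1 ≤ k ∧ ¬ ((k:ℤ) ∣ m) then 1 / q ^ k else 0)
        + (if 2 ≤ k ∧ (k:ℤ) ∣ m then 1 / q ^ k else 0) := by
    intro k
    match k with
    | 0 => norm_num
    | 1 => norm_num
    | (j+2) =>
      have h2 : 2 ≤ j + 2 := by omega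
      have h1 : 1 ≤ j + 2 := by omega
      by_cases hd : ((j+2 : ℕ):ℤ) ∣ m
      · have hd' : (j:ℤ) + 2 ∣ m := by exact_mod_cast hd
        simp [hd', h1, h2]
      · have hd' : ¬ ((j:ℤ) + 2 ∣ m) := by exact_mod_cast hd
        simp [hd', h1, h2]
  have hsum1 := qaux_summable hq (fun k => 1 ≤ k ∧ ¬ ((k:ℤ) ∣ m))
  have hsum2 := qaux_summable hq (fun k => 2 ≤ k ∧ (k:ℤ) ∣ m)
  have hLsplit : (1:ℝ) / (q * (q - 1))
      = qnorm q m + ∑' k : ℕ, (if 2 ≤ k ∧ (k:ℤ) ∣ m then 1 / q ^ k else 0) := by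
    rw [← qtsum_two hq, tsum_congr hsplit]
    exact Summable.tsum_add hsum1 hsum2
  set e : ℝ := ∑' k : ℕ, (if 2 ≤ k ∧ (k:ℤ) ∣ m then 1 / q ^ k else 0) with hee
  have he_nonneg : 0 ≤ e :=
    tsum_nonneg (fun k => by
      split_ifs
      · positivity
      · exact le_rfl)
  have he_le : e ≤ (1/q)^(N+1) * (1 - 1/q)⁻¹ := by
    apply qtail_le hq N
    intro k hk hc
    obtain ⟨hk2, hkd⟩ := hc
    have hka : (k:ℤ) ∣ (a n : ℤ) := hn k (Finset.mem_Icc.mpr ⟨by omega, hk⟩)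
    have hd1 : (k:ℤ) ∣ 1 := by
      have := dvd_sub hkd hka
      simpa [hm] using this
    have hd1' : k ∣ 1 := by exact_mod_cast hd1
    rw [Nat.dvd_one] at hd1'
    omega
  rw [Real.dist_eq, hLsplit]
  have habs : qnorm q m - (qnorm q m + e) = -e := by ring
  rw [habs, abs_neg, abs_of_nonneg he_nonneg]
  exact lt_of_le_of_lt he_le hN
end

section
/- There is a subsequence of the sequence of prime numbers that converges to 1 with respect to the Fürstenberg topology on ℤ. Equivalently, 1 is a cluster point of the sequence of primes in the Fürstenberg topology. -/
/-!
Every neighbourhood of `1` in the Fürstenberg topology contains a progression `1 + bℤ`, and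
`b ∣ n!` once `n ≥ |b|`. By Dirichlet's theorem there are arbitrarily large primes `≡ 1 mod n!`
for each `n`, so one can pick indices `φ 0 < φ 1 < ⋯` with `p (φ n) ≡ 1 mod n!`; this
subsequence converges to `1`, which is then a cluster point of the whole sequence.
-/

/-- The Fürstenberg topology on ℤ, generated by arithmetic progressions a + bℤ (b ≥ 1). -/
def furstenbergTopology : TopologicalSpace ℤ :=
  TopologicalSpace.generateFrom
    {S | ∃ a b : ℤ, 0 < b ∧ S = {x : ℤ | ∃ n : ℤ, x = a + b * n}}

open Filter Topology

theorem tendsto_furstenberg_of_eventually_modEq {α : Type*} {l : Filter α} {u : α → ℤ} {a : ℤ}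
    (h : ∀ b : ℤ, 0 < b → ∀ᶠ x in l, u x ≡ a [ZMOD b]) :
    Tendsto u l (@nhds ℤ furstenbergTopology a) := by
  rw [furstenbergTopology, TopologicalSpace.tendsto_nhds_generateFrom_iff]
  rintro _ ⟨c, b, hb, rfl⟩ ⟨k, hk⟩
  filter_upwards [h b hb] with x hx
  obtain ⟨m, hm⟩ := Int.modEq_iff_dvd.mp hx.symm
  exact ⟨k + m, by linear_combination hm + hk⟩

theorem tendsto_furstenberg_of_modEq_factorial {u : ℕ → ℤ} {a : ℤ}
    (h : ∀ n, u n ≡ a [ZMOD n.factorial]) :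
    Tendsto u atTop (@nhds ℤ furstenbergTopology a) := by
  refine tendsto_furstenberg_of_eventually_modEq fun b hb => ?_
  filter_upwards [eventually_ge_atTop b.natAbs] with n hn
  exact (h n).of_dvd (Int.dvd_natCast.mpr (Nat.dvd_factorial (Int.natAbs_pos.mpr hb.ne') hn))

theorem frequently_modEq_one_of_strictMono_of_forall_prime {p : ℕ → ℕ} (hmono : StrictMono p)
    (hall : ∀ r : ℕ, r.Prime → ∃ n, p n = r) {m : ℕ} (hm : m ≠ 0) :
    ∃ᶠ k in atTop, p k ≡ 1 [MOD m] := by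
  refine frequently_atTop.mpr fun N => ?_
  obtain ⟨r, hr, hNr, hr1⟩ := Nat.exists_prime_gt_modEq_one (p N) hm
  obtain ⟨k, rfl⟩ := hall r hr
  exact ⟨k, (hmono.lt_iff_lt.mp hNr).le, hr1⟩

theorem stmt_16_general (p : ℕ → ℕ) (hmono : StrictMono p)
    (hall : ∀ r : ℕ, r.Prime → ∃ n, p n = r) :
    letI : TopologicalSpace ℤ := furstenbergTopology
    (∃ φ : ℕ → ℕ, StrictMono φ ∧
      Filter.Tendsto (fun n => ((p (φ n) : ℤ))) Filter.atTop (nhds 1)) ∧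
    MapClusterPt (1 : ℤ) Filter.atTop (fun n => ((p n : ℤ))) := by
  let : TopologicalSpace ℤ := furstenbergTopology
  obtain ⟨φ, hφ, hmod⟩ := extraction_forall_of_frequently fun n =>
    frequently_modEq_one_of_strictMono_of_forall_prime hmono hall n.factorial_ne_zero
  have htend : Tendsto (fun n => (p (φ n) : ℤ)) atTop (𝓝 1) :=
    tendsto_furstenberg_of_modEq_factorial fun n => Int.natCast_modEq_iff.mpr (hmod n)
  exact ⟨⟨φ, hφ, htend⟩, htend.mapClusterPt.of_comp hφ.tendsto_atTop⟩

theorem stmt_16 (p : ℕ → ℕ) (hmono : StrictMono p) (hprime : ∀ n, (p n).Prime)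
    (hall : ∀ r : ℕ, r.Prime → ∃ n, p n = r) :
    letI : TopologicalSpace ℤ := furstenbergTopology
    (∃ φ : ℕ → ℕ, StrictMono φ ∧
      Filter.Tendsto (fun n => ((p (φ n) : ℤ))) Filter.atTop (nhds 1)) ∧
    MapClusterPt (1 : ℤ) Filter.atTop (fun n => ((p n : ℤ))) :=
  stmt_16_general p hmono hall
end

section
/- For every nonzero integer n, the sum-q-norm satisfies ξ(n) = d(n) − ∑_{k ≥ 2, k | n} ζ(k), where d is the number-of-divisors function and ζ is the Riemann zeta function. In particular, for any prime p, ξ(p) + ζ(p) = 2. -/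
/-- The sum-q-norm: sum of the q-norms over integers q ≥ 2. -/
noncomputable def xiNorm (n : ℤ) : ℝ :=
  ∑' q : ℕ, if 2 ≤ q then qnorm (q : ℝ) n else 0

/-- The real Riemann zeta values ζ(k) = ∑_{n ≥ 1} 1/n^k. -/
noncomputable def realZeta (k : ℕ) : ℝ := ∑' n : ℕ, 1 / ((n : ℝ) + 1) ^ k

/-!
For `q ≥ 2` and `n ≠ 0`, the complement of the divisors in `{k ≥ 1}` gives
`‖n‖_q = ∑_{k ≥ 2} q⁻ᵏ - ∑_{k ∣ n, k ≥ 2} q⁻ᵏ = 1/(q(q-1)) - ∑_{k ∣ n, k ≥ 2} q⁻ᵏ`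
(the divisor `k = 1` never contributes). Summing over `q ≥ 2`, the first terms telescope to `1`
and each `q⁻ᵏ` sums to `ζ(k) - 1`, so `ξ(n) = 1 + #{k ∣ n, k ≥ 2} - ∑_{k ∣ n, k ≥ 2} ζ(k)`,
and `1 + #{k ∣ n, k ≥ 2} = d(n)`.
-/

open Finset Filter Topology

theorem hasSum_ite_le_iff {G : Type*} [AddCommGroup G] [TopologicalSpace G]
    [IsTopologicalAddGroup G] {f : ℕ → G} {a : G} (m : ℕ) :
    HasSum (fun n => if m ≤ n then f n else 0) a ↔ HasSum (fun n => f (n + m)) a := by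
  rw [← hasSum_nat_add_iff' m, sum_eq_zero fun i hi => if_neg (by simpa using hi), sub_zero]
  simp only [le_add_iff_nonneg_left, zero_le, if_true]

theorem hasSum_sub_succ_of_antitone {f : ℕ → ℝ} (hf : Antitone f) (h0 : Tendsto f atTop (𝓝 0)) :
    HasSum (fun n => f n - f (n + 1)) (f 0) := by
  rw [hasSum_iff_tendsto_nat_of_nonneg fun n => sub_nonneg.2 (hf n.le_succ)]
  simp_rw [sum_range_sub']
  simpa using tendsto_const_nhds.sub h0

theorem hasSum_ite_two_le_one_div_pow {q : ℝ} (hq : 1 < q) :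
    HasSum (fun k : ℕ => if 2 ≤ k then 1 / q ^ k else 0) (1 / (q * (q - 1))) := by
  have hq' : 1 / q < 1 := (div_lt_one (by linarith)).2 hq
  have hterm : (fun k : ℕ => 1 / q ^ (k + 2)) = fun k => (1 / q) ^ 2 * (1 / q) ^ k := by
    ext k
    rw [← pow_add, add_comm, one_div_pow]
  have hval : 1 / (q * (q - 1)) = (1 / q) ^ 2 * (1 - 1 / q)⁻¹ := by
    have : q - 1 ≠ 0 := by linarith
    field_simp
  rw [hasSum_ite_le_iff, hterm, hval]
  exact (hasSum_geometric_of_lt_one (by positivity) hq').mul_left _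

theorem hasSum_one_div_mul_sub_one :
    HasSum (fun q : ℕ => 1 / (((q + 2 : ℕ) : ℝ) * ((q + 2 : ℕ) - 1))) 1 := by
  have hf : Antitone fun n : ℕ => 1 / ((n : ℝ) + 1) := fun a b hab =>
    one_div_le_one_div_of_le (by positivity) (by gcongr)
  have hterm : (fun q : ℕ => 1 / (((q + 2 : ℕ) : ℝ) * ((q + 2 : ℕ) - 1))) =
      fun n : ℕ => 1 / ((n : ℝ) + 1) - 1 / (((n + 1 : ℕ) : ℝ) + 1) := by
    ext n
    push_cast
    rw [show (n : ℝ) + 2 - 1 = n + 1 by ring]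
    field_simp
    ring
  rw [hterm]
  simpa using hasSum_sub_succ_of_antitone hf tendsto_one_div_add_atTop_nhds_zero_nat

theorem hasSum_realZeta_sub_one {k : ℕ} (hk : 2 ≤ k) :
    HasSum (fun q : ℕ => 1 / ((q + 2 : ℕ) : ℝ) ^ k) (realZeta k - 1) := by
  have hsum : Summable fun n : ℕ => 1 / ((n : ℝ) + 1) ^ k := by
    simpa using (summable_nat_add_iff 1).2 (Real.summable_one_div_nat_pow.2 (by omega))
  have hterm : (fun q : ℕ => 1 / ((q + 2 : ℕ) : ℝ) ^ k) =
      fun n => 1 / (((n + 1 : ℕ) : ℝ) + 1) ^ k := by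
    ext n
    push_cast
    ring
  rw [hterm, realZeta]
  simpa using (hasSum_nat_add_iff' 1).2 hsum.hasSum

theorem mem_filter_two_le_divisors_natAbs {n : ℤ} (hn : n ≠ 0) {k : ℕ} :
    k ∈ n.natAbs.divisors.filter (2 ≤ ·) ↔ 2 ≤ k ∧ (k : ℤ) ∣ n := by
  simp [Int.natCast_dvd, hn, and_comm]

theorem card_filter_two_le_divisors_add_one {n : ℕ} (hn : n ≠ 0) :
    #(n.divisors.filter (2 ≤ ·)) + 1 = #n.divisors := by
  have : n.divisors.filter (2 ≤ ·) = n.divisors.erase 1 := by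
    ext k
    simp only [mem_filter, mem_erase]
    constructor
    · rintro ⟨hk, h2k⟩
      exact ⟨by omega, hk⟩
    · rintro ⟨hk1, hk⟩
      exact ⟨hk, by have := Nat.pos_of_mem_divisors hk; omega⟩
  rw [this, card_erase_add_one (Nat.one_mem_divisors.2 hn)]

theorem qnorm_eq_s17 {n : ℤ} (hn : n ≠ 0) {q : ℝ} (hq : 1 < q) :
    qnorm q n = 1 / (q * (q - 1)) - ∑ k ∈ n.natAbs.divisors.filter (2 ≤ ·), 1 / q ^ k := by
  set D := n.natAbs.divisors.filter (2 ≤ ·)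
  have hD : HasSum (fun k : ℕ => if k ∈ D then 1 / q ^ k else 0) (∑ k ∈ D, 1 / q ^ k) := by
    have := hasSum_sum_of_ne_finset_zero (f := fun k : ℕ => if k ∈ D then 1 / q ^ k else 0)
      (L := SummationFilter.unconditional ℕ) fun k hk => if_neg hk
    rwa [sum_ite_mem, inter_self] at this
  refine ((hasSum_ite_two_le_one_div_pow hq).sub hD).tsum_eq ▸ tsum_congr fun k => ?_
  simp only [D, mem_filter_two_le_divisors_natAbs hn]
  rcases lt_or_ge k 2 with hk | hk
  · interval_cases k <;> simp
  · by_cases hkn : (k : ℤ) ∣ n <;> simp [hk, hkn, show 1 ≤ k by omega]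

theorem xiNorm_eq {n : ℤ} (hn : n ≠ 0) :
    xiNorm n = #n.natAbs.divisors - ∑ k ∈ n.natAbs.divisors.filter (2 ≤ ·), realZeta k := by
  set D := n.natAbs.divisors.filter (2 ≤ ·)
  have hZ : HasSum (fun q : ℕ => ∑ k ∈ D, 1 / ((q + 2 : ℕ) : ℝ) ^ k) (∑ k ∈ D, (realZeta k - 1)) :=
    hasSum_sum fun k hk => hasSum_realZeta_sub_one (mem_filter.1 hk).2
  have hxi : HasSum (fun q : ℕ => if 2 ≤ q then qnorm q n else 0)
      (1 - ∑ k ∈ D, (realZeta k - 1)) := by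
    rw [hasSum_ite_le_iff]
    convert hasSum_one_div_mul_sub_one.sub hZ using 2 with q
    exact qnorm_eq_s17 hn (by push_cast; linarith [q.cast_nonneg (α := ℝ)])
  have hcard : (#D : ℝ) + 1 = #n.natAbs.divisors := by
    exact_mod_cast card_filter_two_le_divisors_add_one (Int.natAbs_ne_zero.2 hn)
  rw [xiNorm, hxi.tsum_eq, sum_sub_distrib, sum_const, nsmul_one, ← hcard]
  ring

theorem xiNorm_prime_add_realZeta {p : ℕ} (hp : p.Prime) : xiNorm p + realZeta p = 2 := by
  have hD : ({1, p} : Finset ℕ).filter (2 ≤ ·) = {p} := by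
    simp [filter_insert, hp.two_le]
  rw [xiNorm_eq (by exact_mod_cast hp.ne_zero), Int.natAbs_natCast, hp.divisors, hD,
    card_pair hp.ne_one.symm]
  simp only [sum_singleton]
  norm_num

theorem stmt_17 :
    (∀ n : ℤ, n ≠ 0 →
      xiNorm n = (n.natAbs.divisors.card : ℝ) -
        ∑ k ∈ n.natAbs.divisors.filter (fun k => 2 ≤ k), realZeta k) ∧
    (∀ p : ℕ, p.Prime → xiNorm (p : ℤ) + realZeta p = 2) :=
  ⟨fun _ => xiNorm_eq, fun _ => xiNorm_prime_add_realZeta⟩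
end
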